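/- arXiv:2510.05068 — 3 statements merged into one kernel-verified Lean document; each statement's English description precedes it below -/
import Mathlib

section
/- Let X_1, ..., X_N be 0-1 incidence vectors in F_q^K of sets P_1, ..., P_N ⊆ [K], where q is a prime greater than min_i |P_i|. With Q_{i,j} defined as in the CarPSI-ring recursion (Q_{1,1}=h, Q_{1,2}=h+X_1, Q_{i,j}=Q_{i-1,j}∘X_i+S_i), and answers A_j = Q_{N-1,j}^T X_N + s for j=1,2 (s ∈ F_q a common pad), the difference A_2 − A_1 equals |P_1 ∩ P_2 ∩ ... ∩ P_N| as an element of F_q, and since q > min_i |P_i| ≥ |∩_i P_i|, this determines the intersection cardinality exactly. -/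
/-!
The two query chains see the same masks `S i` and the same multipliers `X i`, so their
difference satisfies the homogeneous recursion `D i = D (i-1) ∘ X i` with `D 1 = X 1`; hence
`A₂ - A₁ = 1ᵀ(X₁ ∘ ⋯ ∘ X_N)`, which counts the common elements of the `P i` modulo `q`.
That count is at most `min_i |P i| < q`, so it is recovered exactly.
-/

open Finset

theorem sub_eq_prod_Icc_of_affine_rec {R : Type*} [CommRing R] {n : ℕ}
    (Q : ℕ → Fin 2 → R) (X S : ℕ → R) (h₁ : Q 1 1 - Q 1 0 = X 1)
    (hrec : ∀ i, 2 ≤ i → i ≤ n → ∀ j, Q i j = Q (i - 1) j * X i + S i) :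
    ∀ i, 1 ≤ i → i ≤ n → Q i 1 - Q i 0 = ∏ j ∈ Icc 1 i, X j := by
  intro i hi
  induction i, hi using Nat.le_induction with
  | base => exact fun _ => by simpa using h₁
  | succ i hi ih =>
    intro hle
    have hrec' := hrec (i + 1) (by omega) hle
    simp only [Nat.add_sub_cancel] at hrec'
    rw [hrec' 1, hrec' 0, prod_Icc_succ_top (by omega), ← ih (by omega)]
    ring

theorem sum_prod_indicator_eq_card_inf {ι α R : Type*} [Fintype α] [DecidableEq α]
    [CommSemiring R] {I : Finset ι} (P : ι → Finset α) (X : ι → α → R)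
    (hX : ∀ i ∈ I, ∀ k, X i k = if k ∈ P i then 1 else 0) :
    ∑ k, ∏ i ∈ I, X i k = ((I.inf P).card : R) := by
  have hprod : ∀ k, ∏ i ∈ I, X i k = if k ∈ I.inf P then 1 else 0 := fun k => by
    simp only [prod_congr rfl fun i hi => hX i hi k, prod_boole, mem_inf]
  simp only [hprod, sum_boole, filter_mem_eq_inter, univ_inter]

/-- Correctness of CarPSI-ring: with `X i` the 0-1 incidence vector of
`P i ⊆ [K]`, the CarPSI-ring query chain, and answers
`A j = Q (N-1) j ⬝ X N + s`, the difference `A 1 - A 0` equals the cardinality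
of `P 1 ∩ ... ∩ P N` as an element of `F_q`; since `q > min_i |P_i|`, this
cardinality is less than `q`, so it is determined exactly. -/
theorem stmt3 {q K N : ℕ} [Fact q.Prime] (hN : 2 ≤ N)
    (P : ℕ → Finset (Fin K))
    (hq : ∃ i ∈ Finset.Icc 1 N, (P i).card < q)
    (X : ℕ → (Fin K → ZMod q))
    (hX : ∀ i ∈ Finset.Icc 1 N, ∀ k, X i k = if k ∈ P i then 1 else 0)
    (h : Fin K → ZMod q) (S : ℕ → (Fin K → ZMod q)) (s : ZMod q)
    (Q : ℕ → Fin 2 → (Fin K → ZMod q))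
    (hQ10 : Q 1 0 = h) (hQ11 : Q 1 1 = h + X 1)
    (hrec : ∀ i, 2 ≤ i → i ≤ N - 1 → ∀ j, Q i j = Q (i-1) j * X i + S i)
    (A : Fin 2 → ZMod q)
    (hA : ∀ j, A j = (∑ k, Q (N-1) j k * X N k) + s) :
    A 1 - A 0 = (((Finset.Icc 1 N).inf P).card : ZMod q) ∧
      ((Finset.Icc 1 N).inf P).card < q := by
  have hdiff : Q (N - 1) 1 - Q (N - 1) 0 = ∏ j ∈ Icc 1 (N - 1), X j :=
    sub_eq_prod_Icc_of_affine_rec Q X S (by rw [hQ10, hQ11]; abel) hrec _ (by omega) le_rfl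
  have hprod : ∏ j ∈ Icc 1 N, X j = (∏ j ∈ Icc 1 (N - 1), X j) * X N := by
    obtain ⟨m, rfl⟩ : ∃ m, N = m + 1 := ⟨N - 1, by omega⟩
    exact prod_Icc_succ_top (by omega) X
  refine ⟨?_, ?_⟩
  · calc A 1 - A 0 = ∑ k, (Q (N - 1) 1 - Q (N - 1) 0) k * X N k := by
          simp only [hA, add_sub_add_right_eq_sub, ← sum_sub_distrib, ← sub_mul, Pi.sub_apply]
      _ = ∑ k, (∏ j ∈ Icc 1 N, X j) k := by rw [hdiff, hprod]; rfl
      _ = _ := by simpa only [prod_apply] using sum_prod_indicator_eq_card_inf P X hX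
  · obtain ⟨i, hi, hiq⟩ := hq
    exact (card_le_card (inf_le hi)).trans_lt hiq
end

section
/- Fix positive integers N ≥ 2, T ≥ 1, K with Σ_{r=1}^T μ_r = K where each μ_r ≥ 1, and R ∈ [1, T]. If R < T and μ_R ≥ 1, the ring-setup DOFSP cost satisfies C_ring = 2N(Σ_{r=1}^R μ_r) + 2(R − Σ_{r=1}^{R−1} μ_r) ≤ 2NK = C_PSI,ring, i.e., the DOFSP scheme never costs more than ring PSI. -/
/-!
Every block has `μ_r ≥ 1`, so `Σ_{r<R} μ_r ≥ R - 1` and the correction term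
`2 (R - Σ_{r<R} μ_r)` is at most `2`. Since `R < T`, the remaining block
`μ_{R+1} ≥ 1` gives `Σ_{r≤R} μ_r ≤ K - 1`, and `2N (K - 1) + 2 ≤ 2NK` because `N ≥ 1`.
-/

open Finset

theorem le_sum_Icc_of_one_le {μ : ℕ → ℕ} {n : ℕ} (h : ∀ r ∈ Icc 1 n, 1 ≤ μ r) :
    n ≤ ∑ r ∈ Icc 1 n, μ r := by
  simpa using card_nsmul_le_sum (Icc 1 n) μ 1 h

theorem sum_Icc_add_one_le_of_lt {μ : ℕ → ℕ} {m n : ℕ} (hmn : m < n)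
    (h : ∀ r ∈ Icc 1 n, 1 ≤ μ r) :
    ∑ r ∈ Icc 1 m, μ r + 1 ≤ ∑ r ∈ Icc 1 n, μ r :=
  calc ∑ r ∈ Icc 1 m, μ r + 1
      ≤ ∑ r ∈ Icc 1 m, μ r + μ (m + 1) := Nat.add_le_add_left (h _ (by simp; omega)) _
    _ = ∑ r ∈ Icc 1 (m + 1), μ r := (sum_Icc_succ_top (by omega) μ).symm
    _ ≤ ∑ r ∈ Icc 1 n, μ r := sum_le_sum_of_subset (Icc_subset_Icc_right hmn)

theorem stmt8_general (N T R K : ℕ) (μ : ℕ → ℕ) (hN : 2 ≤ N)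
    (hμ : ∀ r ∈ Finset.Icc 1 T, 1 ≤ μ r)
    (hK : ∑ r ∈ Finset.Icc 1 T, μ r = K)
    (hRT : R < T) :
    2 * N * (∑ r ∈ Finset.Icc 1 R, (μ r : ℤ)) +
        2 * ((R : ℤ) - ∑ r ∈ Finset.Icc 1 (R - 1), (μ r : ℤ)) ≤ 2 * N * K := by
  have hcorrection : (R : ℤ) - ∑ r ∈ Icc 1 (R - 1), (μ r : ℤ) ≤ 1 := by
    have := le_sum_Icc_of_one_le fun r hr ↦
      hμ r (Icc_subset_Icc_right (by omega : R - 1 ≤ T) hr)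
    rw [← Nat.cast_sum]
    omega
  have hprefix : ∑ r ∈ Icc 1 R, (μ r : ℤ) + 1 ≤ K := by
    exact_mod_cast hK ▸ sum_Icc_add_one_le_of_lt hRT hμ
  have hN' : (2 : ℤ) ≤ N := by exact_mod_cast hN
  nlinarith

/-- The DOFSP ring-setup scheme never costs more than ring PSI: if `R < T`,
then `C_ring = 2N(Σ_{r=1}^R μ_r) + 2(R - Σ_{r=1}^{R-1} μ_r) ≤ 2NK = C_PSI,ring`,
where `Σ_{r=1}^T μ_r = K` and each `μ_r ≥ 1`. -/
theorem stmt8 (N T R K : ℕ) (μ : ℕ → ℕ) (hN : 2 ≤ N) (hT : 1 ≤ T)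
    (hμ : ∀ r ∈ Finset.Icc 1 T, 1 ≤ μ r)
    (hK : ∑ r ∈ Finset.Icc 1 T, μ r = K)
    (hR : 1 ≤ R) (hRT : R < T) (hμR : 1 ≤ μ R) :
    2 * N * (∑ r ∈ Finset.Icc 1 R, (μ r : ℤ)) +
        2 * ((R : ℤ) - ∑ r ∈ Finset.Icc 1 (R - 1), (μ r : ℤ)) ≤ 2 * N * K :=
  stmt8_general N T R K μ hN hμ hK hRT
end

section
/- Let N_eff ≥ 2 and T ≥ 1. Define for even N_eff the sets R_j = {k·N_eff/2 + ⌈j/2⌉ : k ∈ [0 : ⌊2(T − ⌈j/2⌉)/N_eff⌋]} for j ∈ [1 : N_eff]. Then every round index r ∈ [1 : T] belongs to R_j for exactly two (adjacent, cyclically) values of j. -/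
/-!
Write `N_eff = 2m`. Since `1 ≤ ⌈j/2⌉ ≤ m`, the set `R_j` is the progression of all rounds in `[1 : T]`
congruent to `⌈j/2⌉` modulo `m`. A round `r` therefore lies in `R_j` exactly when `⌈j/2⌉` is the
representative `c = (r - 1) % m + 1` of `r` in `[1 : m]`, and the two indices with `⌈j/2⌉ = c` are
`j = 2c - 1` and `j = 2c`.
-/

open Finset

namespace RingRounds

/-- Euclidean division with remainders in `[1, m]` instead of `[0, m)`. -/
lemma eq_mul_add_iff {m d r k : ℕ} (hr : 1 ≤ r) (hd : 1 ≤ d) (hdm : d ≤ m) :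
    r = k * m + d ↔ k = (r - 1) / m ∧ d = (r - 1) % m + 1 := by
  have h := Nat.div_mod_unique (a := r - 1) (d := k) (c := d - 1) (by omega : 0 < m)
  rw [mul_comm m k] at h
  omega

lemma mem_image_range_mul_add_iff {m d r T : ℕ} (hd : 1 ≤ d) (hdm : d ≤ m) (hr : r ∈ Icc 1 T) :
    r ∈ (range ((T - d) / m + 1)).image (fun k => k * m + d) ↔ d = (r - 1) % m + 1 := by
  rw [mem_Icc] at hr
  simp only [mem_image, mem_range]
  constructor
  · rintro ⟨k, -, hk⟩
    exact ((eq_mul_add_iff hr.1 hd hdm).mp hk.symm).2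
  · intro hrep
    have hr_eq := (eq_mul_add_iff hr.1 hd hdm).mpr ⟨rfl, hrep⟩
    refine ⟨(r - 1) / m, Nat.lt_succ_of_le ((Nat.le_div_iff_mul_le (by omega)).mpr ?_), hr_eq.symm⟩
    omega

lemma filter_Icc_add_one_div_two_eq {m c : ℕ} (hc : 1 ≤ c) (hcm : c ≤ m) :
    (Icc 1 (2 * m)).filter (fun j => (j + 1) / 2 = c) = {2 * c - 1, 2 * c} := by
  ext j
  simp only [mem_filter, mem_Icc, mem_insert, mem_singleton]
  omega

end RingRounds

open RingRounds in
theorem stmt17_general (Neff T : ℕ) (hNeff : 2 ≤ Neff) (heven : Even Neff)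
    (R : ℕ → Finset ℕ)
    (hR : ∀ j, R j =
      (Finset.range (2 * (T - (j + 1) / 2) / Neff + 1)).image
        (fun k => k * (Neff / 2) + (j + 1) / 2)) :
    ∀ r ∈ Finset.Icc 1 T,
      ((Finset.Icc 1 Neff).filter (fun j => r ∈ R j)).card = 2 := by
  intro r hr
  obtain ⟨m, rfl⟩ := heven.two_dvd
  have hm : 0 < m := by omega
  have hmem : ∀ j ∈ Icc 1 (2 * m), r ∈ R j ↔ (j + 1) / 2 = (r - 1) % m + 1 := by
    intro j hj
    rw [mem_Icc] at hj
    rw [hR, Nat.mul_div_mul_left _ _ two_pos, Nat.mul_div_cancel_left _ two_pos]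
    exact mem_image_range_mul_add_iff (by omega) (by omega) hr
  rw [filter_congr hmem, filter_Icc_add_one_div_two_eq le_add_self
    (Nat.succ_le_of_lt (Nat.mod_lt _ hm))]
  exact card_pair (by omega)

/-- Cyclic assignment of rounds to database pairs in the ring setup: for even
`N_eff ≥ 2` and `R_j = {k·N_eff/2 + ⌈j/2⌉ : k ∈ [0 : ⌊2(T - ⌈j/2⌉)/N_eff⌋]}`
for `j ∈ [1 : N_eff]`, every round `r ∈ [1 : T]` belongs to `R_j` for exactly
two values of `j`. (In ℕ, `⌈j/2⌉ = (j+1)/2` and `⌊·⌋` is natural division.) -/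
theorem stmt17 (Neff T : ℕ) (hNeff : 2 ≤ Neff) (heven : Even Neff) (hT : 1 ≤ T)
    (R : ℕ → Finset ℕ)
    (hR : ∀ j, R j =
      (Finset.range (2 * (T - (j + 1) / 2) / Neff + 1)).image
        (fun k => k * (Neff / 2) + (j + 1) / 2)) :
    ∀ r ∈ Finset.Icc 1 T,
      ((Finset.Icc 1 Neff).filter (fun j => r ∈ R j)).card = 2 :=
  stmt17_general Neff T hNeff heven R hR
end
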